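/- A freely reduced word w over {a, b, a⁻¹, b⁻¹} is geodesic in B_3 if and only if: (1) w does not contain subwords from both {ab, ba} and {a⁻¹b⁻¹, b⁻¹a⁻¹}; (2) w does not contain both a subword aba (or bab) and a letter a⁻¹ or b⁻¹; and (3) w does not contain both a subword a⁻¹b⁻¹a⁻¹ (or b⁻¹a⁻¹b⁻¹) and a letter a or b. -/

import Mathlib

/-! State space: (m, lead, blocks, trail) encodes z^m · x^lead · (y^{e₁} x) ⋯ (y^{e_k} x) · y^{f}
where blocks = [e₁,…,e_k] (true = y², false = y¹), trail = optional f. -/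

structure St where
  m : ℤ
  lead : Bool
  blocks : List Bool
  trail : Option Bool
deriving DecidableEq

/-- prepend `x` -/
def PX : St → St
  | ⟨m, true, bs, t⟩ => ⟨m+1, false, bs, t⟩
  | ⟨m, false, bs, t⟩ => ⟨m, true, bs, t⟩

/-- prepend `y` -/
def PY : St → St
  | ⟨m, true, bs, t⟩ => ⟨m, false, false :: bs, t⟩
  | ⟨m, false, true :: bs, t⟩ => ⟨m+1, true, bs, t⟩
  | ⟨m, false, false :: bs, t⟩ => ⟨m, false, true :: bs, t⟩
  | ⟨m, false, [], some true⟩ => ⟨m+1, false, [], none⟩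
  | ⟨m, false, [], some false⟩ => ⟨m, false, [], some true⟩
  | ⟨m, false, [], none⟩ => ⟨m, false, [], some false⟩

def zS (s : St) : St := {s with m := s.m + 1}
def zI (s : St) : St := {s with m := s.m - 1}

lemma zI_zS (s : St) : zI (zS s) = s := by
  rcases s with ⟨m, l, b, t⟩; simp [zI, zS]

lemma zS_zI (s : St) : zS (zI s) = s := by
  rcases s with ⟨m, l, b, t⟩; simp [zI, zS]

lemma PX_PX (s : St) : PX (PX s) = zS s := by
  rcases s with ⟨m, (_|_), b, t⟩ <;> simp [PX, zS]

lemma PY_PY_PY (s : St) : PY (PY (PY s)) = zS s := by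
  rcases s with ⟨m, (_|_), (_|⟨(_|_), bs⟩), (_|(_|_))⟩ <;> simp [PY, zS]

lemma PX_zI (s : St) : PX (zI s) = zI (PX s) := by
  rcases s with ⟨m, (_|_), b, t⟩ <;> simp [PX, zI] <;> ring

lemma PY_zI (s : St) : PY (zI s) = zI (PY s) := by
  rcases s with ⟨m, (_|_), (_|⟨(_|_), bs⟩), (_|(_|_))⟩ <;> simp [PY, zI] <;> ring

def eX : Equiv.Perm St :=
  ⟨PX, fun s => zI (PX s),
   fun s => by simp only []; rw [PX_PX, zI_zS],
   fun s => by simp only []; rw [← PX_zI, PX_PX, zS_zI]⟩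

def eY : Equiv.Perm St :=
  ⟨PY, fun s => zI (PY (PY s)),
   fun s => by simp only []; rw [PY_PY_PY, zI_zS],
   fun s => by simp only []; rw [← PY_zI, ← PY_zI, PY_PY_PY, zS_zI]⟩

def zE : Equiv.Perm St := ⟨zS, zI, zI_zS, zS_zI⟩

@[simp] lemma eX_apply (s : St) : eX s = PX s := rfl
@[simp] lemma eY_apply (s : St) : eY s = PY s := rfl
@[simp] lemma zE_apply (s : St) : zE s = zS s := rfl
@[simp] lemma zE_inv_apply (s : St) : zE⁻¹ s = zI s := rfl

lemma eX_eX : eX * eX = zE := by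
  ext s; simp [Equiv.Perm.mul_apply, PX_PX]

lemma eY3 : eY * eY * eY = zE := by
  ext s; simp [Equiv.Perm.mul_apply, PY_PY_PY]

/-- the permutation for left multiplication by `a = z⁻¹y²x` -/
def PA : Equiv.Perm St := zE⁻¹ * (eY * eY) * eX
/-- for `b = z⁻¹xy²` -/
def PB : Equiv.Perm St := zE⁻¹ * eX * (eY * eY)

lemma relABA : PA * PB * PA = PB * PA * PB := by
  have h : ∀ s, (PA * PB * PA) s = (PB * PA * PB) s := by
    intro s
    simp only [PA, PB, Equiv.Perm.mul_apply, eX_apply, eY_apply, zE_inv_apply]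
    rcases s with ⟨m, (_|_), (_|⟨(_|_), (_|⟨(_|_), bs⟩)⟩), (_|(_|_))⟩ <;>
      simp [PX, PY, zI] <;> ring
  exact Equiv.ext h

lemma PA_inv : PA⁻¹ = zE⁻¹ * eX * eY := by
  apply inv_eq_of_mul_eq_one_right
  apply Equiv.ext; intro s
  simp only [PA, Equiv.Perm.mul_apply, eX_apply, eY_apply, zE_inv_apply, Equiv.Perm.one_apply]
  rcases s with ⟨m, (_|_), (_|⟨(_|_), (_|⟨(_|_), bs⟩)⟩), (_|(_|_))⟩ <;>
    simp [PX, PY, zI] <;> ring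

lemma PB_inv : PB⁻¹ = zE⁻¹ * eY * eX := by
  apply inv_eq_of_mul_eq_one_right
  apply Equiv.ext; intro s
  simp only [PB, Equiv.Perm.mul_apply, eX_apply, eY_apply, zE_inv_apply, Equiv.Perm.one_apply]
  rcases s with ⟨m, (_|_), (_|⟨(_|_), (_|⟨(_|_), bs⟩)⟩), (_|(_|_))⟩ <;>
    simp [PX, PY, zI] <;> ring

/-! letter transition functions -/

def Ta (s : St) : St := zI (PY (PY (PX s)))
def Tb (s : St) : St := zI (PX (PY (PY s)))
def TA (s : St) : St := zI (PX (PY s))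
def TB (s : St) : St := zI (PY (PX s))

lemma PA_apply (s : St) : PA s = Ta s := rfl
lemma PB_apply (s : St) : PB s = Tb s := rfl
lemma PA_inv_apply (s : St) : PA⁻¹ s = TA s := by rw [PA_inv]; rfl
lemma PB_inv_apply (s : St) : PB⁻¹ s = TB s := by rw [PB_inv]; rfl

/-! potential function -/

def psi (s : St) : ℤ :=
  2 * s.m + (if s.lead then 1 else 0) + s.blocks.length + s.blocks.count true
    + (if s.trail = some true then 1 else 0)

inductive Shp | E | SX | XY1 | XY2 | Y1 | Y2
deriving DecidableEq

open Shp in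
def shape (s : St) : Shp :=
  match s.lead, s.blocks, s.trail with
  | false, [], none => E
  | true, [], none => SX
  | true, false :: _, _ => XY1
  | true, true :: _, _ => XY2
  | true, [], some false => XY1
  | true, [], some true => XY2
  | false, false :: _, _ => Y1
  | false, true :: _, _ => Y2
  | false, [], some false => Y1
  | false, [], some true => Y2

lemma Ta_good (s : St) (h : shape s ≠ .XY1) :
    psi (Ta s) = psi s ∧ shape (Ta s) = (if shape s = .XY2 then .Y1 else .Y2) := by
  rcases s with ⟨m, (_|_), (_|⟨(_|_), bs⟩), (_|(_|_))⟩ <;>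
    simp_all [Ta, PX, PY, zI, psi, shape] <;> ring

lemma Tb_good (s : St) (h : shape s ≠ .Y1) :
    psi (Tb s) = psi s ∧ shape (Tb s) = (if shape s = .Y2 then .XY1 else .XY2) := by
  rcases s with ⟨m, (_|_), (_|⟨(_|_), bs⟩), (_|(_|_))⟩ <;>
    simp_all [Tb, PX, PY, zI, psi, shape] <;> ring

lemma TA_good (s : St)
    (h : shape s = .E ∨ shape s = .SX ∨ shape s = .XY1 ∨ shape s = .XY2) :
    psi (TA s) = psi s - 1 ∧ shape (TA s) = .XY1 := by
  rcases s with ⟨m, (_|_), (_|⟨(_|_), bs⟩), (_|(_|_))⟩ <;>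
    simp_all [TA, PX, PY, zI, psi, shape] <;> ring

lemma TB_good (s : St)
    (h : shape s = .E ∨ shape s = .SX ∨ shape s = .Y1 ∨ shape s = .Y2) :
    psi (TB s) = psi s - 1 ∧ shape (TB s) = .Y1 := by
  rcases s with ⟨m, (_|_), (_|⟨(_|_), bs⟩), (_|(_|_))⟩ <;>
    simp_all [TB, PX, PY, zI, psi, shape] <;> ring

lemma Ta_bound (s : St) : psi s ≤ psi (Ta s) := by
  rcases s with ⟨m, (_|_), (_|⟨(_|_), bs⟩), (_|(_|_))⟩ <;>
    simp [Ta, PX, PY, zI, psi] <;> omega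

lemma Tb_bound (s : St) : psi s ≤ psi (Tb s) := by
  rcases s with ⟨m, (_|_), (_|⟨(_|_), bs⟩), (_|(_|_))⟩ <;>
    simp [Tb, PX, PY, zI, psi] <;> omega

lemma TA_bound (s : St) : psi s - 1 ≤ psi (TA s) := by
  rcases s with ⟨m, (_|_), (_|⟨(_|_), bs⟩), (_|(_|_))⟩ <;>
    simp [TA, PX, PY, zI, psi] <;> omega

lemma TB_bound (s : St) : psi s - 1 ≤ psi (TB s) := by
  rcases s with ⟨m, (_|_), (_|⟨(_|_), bs⟩), (_|(_|_))⟩ <;>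
    simp [TB, PX, PY, zI, psi] <;> omega


def B3Rel : Set (FreeGroup Bool) :=
  {FreeGroup.of true * FreeGroup.of false * FreeGroup.of true *
    (FreeGroup.of false * FreeGroup.of true * FreeGroup.of false)⁻¹}

abbrev B3 := PresentedGroup B3Rel

def ga : B3 := PresentedGroup.of true
def gb : B3 := PresentedGroup.of false

/-- generator by a boolean: `true ↦ a`, `false ↦ b`. -/
def gen (x : Bool) : B3 := if x then ga else gb

/-- A letter: first component is the generator (`true` = a), second the sign
(`true` = positive). -/
abbrev Letter := Bool × Bool

def evalLetter (l : Letter) : B3 := if l.2 then gen l.1 else (gen l.1)⁻¹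

def evalWord (w : List Letter) : B3 := (w.map evalLetter).prod

/-- `w` is geodesic: no shorter word represents the same element. -/
def IsGeodesic (w : List Letter) : Prop :=
  ∀ v : List Letter, evalWord v = evalWord w → w.length ≤ v.length

/-- `w` is freely reduced. -/
def Reduced (w : List Letter) : Prop :=
  w.Chain' fun x y => ¬ (x.1 = y.1 ∧ x.2 = !y.2)

def la : Letter := (true, true)
def lA : Letter := (true, false)
def lb : Letter := (false, true)
def lB : Letter := (false, false)

theorem braid : ga * gb * ga = gb * ga * gb := by
  have h2 : (PresentedGroup.mk B3Rel) (FreeGroup.of true * FreeGroup.of false * FreeGroup.of true *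
      (FreeGroup.of false * FreeGroup.of true * FreeGroup.of false)⁻¹) = 1 := by
    apply (QuotientGroup.eq_one_iff _).2
    exact Subgroup.subset_normalClosure rfl
  rw [map_mul, map_inv] at h2
  have := mul_inv_eq_one.1 h2
  simpa [ga, gb, PresentedGroup.of, map_mul] using this

/-- the homomorphism to `Perm St` -/
def phi : B3 →* Equiv.Perm St :=
  PresentedGroup.toGroup (f := fun x => if x then PA else PB)
    (by
      intro r hr
      have : r = FreeGroup.of true * FreeGroup.of false * FreeGroup.of true *
          (FreeGroup.of false * FreeGroup.of true * FreeGroup.of false)⁻¹ := hr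
      subst this
      simp only [map_mul, map_inv, FreeGroup.lift_apply_of, if_pos, if_neg, Bool.false_eq_true,
        ite_true, ite_false]
      rw [mul_inv_eq_one]
      exact relABA)

@[simp] lemma phi_ga : phi ga = PA := PresentedGroup.toGroup.of _
@[simp] lemma phi_gb : phi gb = PB := PresentedGroup.toGroup.of _

def Tl (l : Letter) : St → St :=
  match l with
  | (true, true) => Ta
  | (false, true) => Tb
  | (true, false) => TA
  | (false, false) => TB

lemma phi_letter (l : Letter) (s : St) : phi (evalLetter l) s = Tl l s := by
  rcases l with ⟨(_|_), (_|_)⟩ <;>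
    simp [evalLetter, gen, Tl, map_inv, PA_apply, PB_apply, PA_inv_apply, PB_inv_apply]

def s0 : St := ⟨0, false, [], none⟩

def stw (w : List Letter) : St := w.foldr Tl s0

lemma stw_eval (w : List Letter) : stw w = phi (evalWord w) s0 := by
  induction w with
  | nil => simp [stw, evalWord, s0]
  | cons l t ih =>
      have : evalWord (l :: t) = evalLetter l * evalWord t := by
        simp [evalWord]
      rw [this, map_mul]
      simp only [Equiv.Perm.mul_apply]
      rw [← ih, phi_letter]
      rfl

def negc (w : List Letter) : ℕ := (w.filter (fun l => l.2 = false)).length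

@[simp] lemma negc_nil : negc [] = 0 := rfl

lemma negc_cons_neg {l : Letter} {t : List Letter} (h : l.2 = false) :
    negc (l :: t) = negc t + 1 := by
  simp [negc, List.filter_cons, h]

lemma negc_cons_pos {l : Letter} {t : List Letter} (h : l.2 = true) :
    negc (l :: t) = negc t := by
  simp [negc, List.filter_cons, h]

/-- general lower bound: each letter decreases `psi` by at most its negativity -/
lemma psi_stw_ge (w : List Letter) : -(negc w : ℤ) ≤ psi (stw w) := by
  induction w with
  | nil => simp [stw, psi, s0]
  | cons l t ih =>
      have hs : stw (l :: t) = Tl l (stw t) := rfl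
      rw [hs]
      rcases l with ⟨g, (_|_)⟩
      · rw [negc_cons_neg rfl]
        rcases g with _|_
        · have := TB_bound (stw t); show _ ≤ psi (TB (stw t)); push_cast; omega
        · have := TA_bound (stw t); show _ ≤ psi (TA (stw t)); push_cast; omega
      · rw [negc_cons_pos rfl]
        rcases g with _|_
        · have := Tb_bound (stw t); show _ ≤ psi (Tb (stw t)); omega
        · have := Ta_bound (stw t); show _ ≤ psi (Ta (stw t)); omega

/-! conditions for the key induction -/

def okp (p q : Letter) : Prop :=
  (p.1 = q.1 → p.2 = q.2) ∧ (p.2 = true ∨ q.2 = true ∨ p.1 = q.1)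

def okt (p q r : Letter) : Prop :=
  ¬(p.2 = true ∧ q.2 = true ∧ r.2 = true ∧ p.1 ≠ q.1 ∧ r.1 = p.1)

def CondA : List Letter → Prop
  | p :: q :: r :: t => okp p q ∧ okt p q r ∧ CondA (q :: r :: t)
  | [p, q] => okp p q
  | _ => True

lemma condA_tail : ∀ {p : Letter} {t : List Letter}, CondA (p :: t) → CondA t
  | _, [], _ => trivial
  | _, [_], _ => trivial
  | _, _ :: _ :: _, h => h.2.2

lemma condA_okp : ∀ {p q : Letter} {t : List Letter}, CondA (p :: q :: t) → okp p q
  | _, _, [], h => h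
  | _, _, _ :: _, h => h.1

lemma condA_okt : ∀ {p q r : Letter} {t : List Letter}, CondA (p :: q :: r :: t) → okt p q r
  | _, _, _, _, h => h.2.1

open Shp in
def shOf : List Letter → Shp
  | [] => .E
  | (true, false) :: _ => .XY1
  | (false, false) :: _ => .Y1
  | (true, true) :: (false, true) :: _ => .Y1
  | (true, true) :: _ => .Y2
  | (false, true) :: (true, true) :: _ => .XY1
  | (false, true) :: _ => .XY2

/-- THE key induction -/
theorem lemA : ∀ w : List Letter, CondA w →
    psi (stw w) = -(negc w : ℤ) ∧ shape (stw w) = shOf w := by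
  intro w
  induction w with
  | nil => exact fun _ => ⟨by simp [stw, psi, s0], by simp [stw, s0, shape, shOf]⟩
  | cons p t ih =>
      intro hc
      have ht := condA_tail hc
      obtain ⟨hψ, hsh⟩ := ih ht
      have hs : stw (p :: t) = Tl p (stw t) := rfl
      rcases p with ⟨pg, ps⟩
      rcases pg with _|_ <;> rcases ps with _|_
      -- p = lB = (false,false) : b⁻¹
      · have hshape : shOf t = .E ∨ shOf t = .SX ∨ shOf t = .Y1 ∨ shOf t = .Y2 := by
          rcases t with _ | ⟨⟨(_|_),(_|_)⟩, t'⟩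
          · left; rfl
          · right; right; left; rfl
          · exact absurd (condA_okp hc) (by simp [okp])
          · exact absurd (condA_okp hc) (by simp [okp])
          · rcases t' with _ | ⟨⟨(_|_),(_|_)⟩, t''⟩ <;> simp [shOf]
        obtain ⟨h1, h2⟩ := TB_good (stw t) (by rw [hsh]; exact hshape)
        rw [hs]
        refine ⟨?_, ?_⟩
        · show psi (TB (stw t)) = _
          rw [h1, hψ, negc_cons_neg rfl]; push_cast; ring
        · show shape (TB (stw t)) = _
          rw [h2]; rfl
      -- p = lb = (false,true) : b
      · have hbad : shOf t ≠ .Y1 := by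
          rcases t with _ | ⟨⟨(_|_),(_|_)⟩, t'⟩
          · simp [shOf]
          · exact absurd (condA_okp hc) (by simp [okp])
          · rcases t' with _ | ⟨⟨(_|_),(_|_)⟩, t''⟩ <;> simp [shOf]
          · simp [shOf]
          · rcases t' with _ | ⟨⟨(_|_),(_|_)⟩, t''⟩ <;> simp [shOf]
            exact absurd (condA_okt hc) (by simp [okt])
        obtain ⟨h1, h2⟩ := Tb_good (stw t) (by rw [hsh]; exact hbad)
        rw [hs]
        refine ⟨?_, ?_⟩
        · show psi (Tb (stw t)) = _
          rw [h1, hψ, negc_cons_pos rfl]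
        · show shape (Tb (stw t)) = _
          rw [h2, hsh]
          rcases t with _ | ⟨⟨(_|_),(_|_)⟩, _ | ⟨⟨(_|_),(_|_)⟩, t''⟩⟩ <;>
            simp_all [shOf]
      -- p = lA = (true,false) : a⁻¹
      · have hshape : shOf t = .E ∨ shOf t = .SX ∨ shOf t = .XY1 ∨ shOf t = .XY2 := by
          rcases t with _ | ⟨⟨(_|_),(_|_)⟩, t'⟩
          · left; rfl
          · exact absurd (condA_okp hc) (by simp [okp])
          · rcases t' with _ | ⟨⟨(_|_),(_|_)⟩, t''⟩ <;> simp [shOf]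
          · right; right; left; rfl
          · exact absurd (condA_okp hc) (by simp [okp])
        obtain ⟨h1, h2⟩ := TA_good (stw t) (by rw [hsh]; exact hshape)
        rw [hs]
        refine ⟨?_, ?_⟩
        · show psi (TA (stw t)) = _
          rw [h1, hψ, negc_cons_neg rfl]; push_cast; ring
        · show shape (TA (stw t)) = _
          rw [h2]; rfl
      -- p = la = (true,true) : a
      · have hbad : shOf t ≠ .XY1 := by
          rcases t with _ | ⟨⟨(_|_),(_|_)⟩, t'⟩
          · simp [shOf]
          · simp [shOf]
          · rcases t' with _ | ⟨⟨(_|_),(_|_)⟩, t''⟩ <;> simp [shOf]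
            exact absurd (condA_okt hc) (by simp [okt])
          · exact absurd (condA_okp hc) (by simp [okp])
          · rcases t' with _ | ⟨⟨(_|_),(_|_)⟩, t''⟩ <;> simp [shOf]
        obtain ⟨h1, h2⟩ := Ta_good (stw t) (by rw [hsh]; exact hbad)
        rw [hs]
        refine ⟨?_, ?_⟩
        · show psi (Ta (stw t)) = _
          rw [h1, hψ, negc_cons_pos rfl]
        · show shape (Ta (stw t)) = _
          rw [h2, hsh]
          rcases t with _ | ⟨⟨(_|_),(_|_)⟩, _ | ⟨⟨(_|_),(_|_)⟩, t''⟩⟩ <;>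
            simp_all [shOf]

/-! exponent-sum homomorphism -/

def bz : B3 →* Multiplicative ℤ :=
  PresentedGroup.toGroup (f := fun _ => Multiplicative.ofAdd (1 : ℤ))
    (by
      intro r hr
      have : r = FreeGroup.of true * FreeGroup.of false * FreeGroup.of true *
          (FreeGroup.of false * FreeGroup.of true * FreeGroup.of false)⁻¹ := hr
      subst this
      simp only [map_mul, map_inv, FreeGroup.lift_apply_of]
      group)

lemma bz_gen (x : Bool) : bz (gen x) = Multiplicative.ofAdd (1 : ℤ) := by
  cases x <;> simp [gen, ga, gb, bz, PresentedGroup.toGroup.of]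

lemma bz_letter_pos (g : Bool) : bz (evalLetter (g, true)) = Multiplicative.ofAdd (1 : ℤ) := by
  simp [evalLetter, bz_gen]

lemma bz_letter_neg (g : Bool) : bz (evalLetter (g, false)) = Multiplicative.ofAdd (-1 : ℤ) := by
  simp only [evalLetter]
  rw [if_neg (by simp)]
  rw [map_inv, bz_gen]
  rfl

lemma len_eq (v : List Letter) :
    (v.length : ℤ) = (bz (evalWord v)).toAdd + 2 * negc v := by
  induction v with
  | nil => simp [evalWord]
  | cons l t ih =>
      have h0 : evalWord (l :: t) = evalLetter l * evalWord t := by simp [evalWord]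
      rw [h0, map_mul]
      rcases l with ⟨g, (_|_)⟩
      · rw [negc_cons_neg rfl, bz_letter_neg, toAdd_mul, toAdd_ofAdd]
        simp only [List.length_cons]
        push_cast
        omega
      · rw [negc_cons_pos rfl, bz_letter_pos, toAdd_mul, toAdd_ofAdd]
        simp only [List.length_cons]
        push_cast
        omega

/-! reverse-inverse anti-automorphism on words -/

def linv (l : Letter) : Letter := (l.1, !l.2)

def revInv (w : List Letter) : List Letter := (w.map linv).reverse

@[simp] lemma revInv_length (w : List Letter) : (revInv w).length = w.length := by
  simp [revInv]

lemma evalLetter_linv (l : Letter) : evalLetter (linv l) = (evalLetter l)⁻¹ := by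
  rcases l with ⟨g, (_|_)⟩ <;> simp [linv, evalLetter]

lemma evalWord_append (u v : List Letter) :
    evalWord (u ++ v) = evalWord u * evalWord v := by
  simp [evalWord]

lemma evalWord_cons (l : Letter) (t : List Letter) :
    evalWord (l :: t) = evalLetter l * evalWord t := by simp [evalWord]

lemma eval_revInv (w : List Letter) : evalWord (revInv w) = (evalWord w)⁻¹ := by
  induction w with
  | nil => simp [revInv, evalWord]
  | cons l t ih =>
      have : revInv (l :: t) = revInv t ++ [linv l] := by simp [revInv]
      rw [this, evalWord_append, ih, evalWord_cons]
      simp [evalWord, evalLetter_linv, mul_comm]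

lemma negc_append (u v : List Letter) : negc (u ++ v) = negc u + negc v := by
  simp [negc, List.filter_append]

lemma negc_revInv (w : List Letter) : negc (revInv w) + negc w = w.length := by
  induction w with
  | nil => simp [revInv]
  | cons l t ih =>
      have h : revInv (l :: t) = revInv t ++ [linv l] := by simp [revInv]
      rw [h, negc_append]
      rcases l with ⟨g, (_|_)⟩
      · rw [show negc [linv (g, false)] = 0 from by simp [negc, linv], negc_cons_neg rfl]
        simp only [List.length_cons]; omega
      · rw [show negc [linv (g, true)] = 1 from by simp [negc, linv], negc_cons_pos rfl]
        simp only [List.length_cons]; omega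

/-! converting infix conditions to CondA -/

lemma okp_of (p q : Letter) (hr : ¬(p.1 = q.1 ∧ p.2 = !q.2))
    (hn : ¬(p = lA ∧ q = lB)) (hn' : ¬(p = lB ∧ q = lA)) : okp p q := by
  rcases p with ⟨(_|_), (_|_)⟩ <;> rcases q with ⟨(_|_), (_|_)⟩ <;>
    simp_all [okp, lA, lB]

lemma okt_of (p q r : Letter) (h3 : ¬(p = la ∧ q = lb ∧ r = la))
    (h4 : ¬(p = lb ∧ q = la ∧ r = lb)) : okt p q r := by
  rcases p with ⟨(_|_), (_|_)⟩ <;> rcases q with ⟨(_|_), (_|_)⟩ <;>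
    rcases r with ⟨(_|_), (_|_)⟩ <;> simp_all [okt, la, lb]

lemma condA_of : ∀ w : List Letter, Reduced w →
    ¬([lA, lB] <:+: w) → ¬([lB, lA] <:+: w) →
    ¬([la, lb, la] <:+: w) → ¬([lb, la, lb] <:+: w) → CondA w := by
  intro w
  induction w with
  | nil => intros; trivial
  | cons p t ih =>
      intro hr h1 h2 h3 h4
      have hct : CondA t := by
        refine ih hr.tail ?_ ?_ ?_ ?_ <;> intro h <;>
          [exact h1 (List.infix_cons h); exact h2 (List.infix_cons h);
           exact h3 (List.infix_cons h); exact h4 (List.infix_cons h)]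
      rcases t with _ | ⟨q, t'⟩
      · trivial
      have hpq : okp p q := by
        refine okp_of p q ?_ ?_ ?_
        · exact (List.isChain_cons_cons.1 hr).1
        · rintro ⟨rfl, rfl⟩
          exact h1 ⟨[], t', rfl⟩
        · rintro ⟨rfl, rfl⟩
          exact h2 ⟨[], t', rfl⟩
      rcases t' with _ | ⟨r, t''⟩
      · exact hpq
      refine ⟨hpq, ?_, hct⟩
      refine okt_of p q r ?_ ?_
      · rintro ⟨rfl, rfl, rfl⟩
        exact h3 ⟨[], t'', rfl⟩
      · rintro ⟨rfl, rfl, rfl⟩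
        exact h4 ⟨[], t'', rfl⟩

/-! transfer along revInv -/

lemma revInv_revInv (w : List Letter) : revInv (revInv w) = w := by
  simp [revInv, List.map_reverse, List.map_map]
  have : linv ∘ linv = id := by
    funext l; rcases l with ⟨g, (_|_)⟩ <;> simp [linv]
  rw [this, List.map_id]

lemma revInv_infix {u w : List Letter} (h : revInv u <:+: w) : u <:+: revInv w := by
  have h2 := (h.map linv).reverse
  have : ((revInv u).map linv).reverse = u := by
    rw [show ((revInv u).map linv).reverse = revInv (revInv u) from rfl, revInv_revInv]
  rwa [this] at h2

lemma infix_revInv_iff {u w : List Letter} : u <:+: revInv w ↔ revInv u <:+: w := by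
  constructor
  · intro h
    have := revInv_infix (u := revInv u) (w := revInv w) (by rwa [revInv_revInv])
    rwa [revInv_revInv] at this
  · exact revInv_infix

lemma reduced_revInv {w : List Letter} (hr : Reduced w) : Reduced (revInv w) := by
  unfold Reduced revInv
  show List.IsChain _ _
  rw [List.isChain_reverse, List.isChain_map]
  refine hr.imp ?_
  rintro ⟨a1, a2⟩ ⟨b1, b2⟩ h
  simp only [flip, linv]
  rcases a2 with _|_ <;> rcases b2 with _|_ <;> simp_all <;> exact fun h2 => h h2.symm

/-! assembling the backward direction -/

lemma key_negc {w : List Letter} (hca : CondA w) :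
    ∀ v, evalWord v = evalWord w → negc w ≤ negc v := by
  intro v hv
  have h1 := (lemA w hca).1
  have h2 := psi_stw_ge v
  have h3 : stw v = stw w := by rw [stw_eval, stw_eval, hv]
  rw [h3, h1] at h2
  exact_mod_cast neg_le_neg_iff.1 h2

lemma negc_le_len (w : List Letter) : negc w ≤ w.length :=
  List.length_filter_le _ _

lemma geodesic_of_negc {w : List Letter}
    (h : ∀ v, evalWord v = evalWord w → negc w ≤ negc v) : IsGeodesic w := by
  intro v hv
  have hb : bz (evalWord v) = bz (evalWord w) := by rw [hv]
  have h1 := len_eq v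
  have h2 := len_eq w
  have h3 := h v hv
  rw [hb] at h1
  have : (w.length : ℤ) ≤ (v.length : ℤ) := by omega
  exact_mod_cast this

lemma geodesic_of_negc_rev {w : List Letter}
    (h : ∀ v, evalWord v = evalWord (revInv w) → negc (revInv w) ≤ negc v) :
    IsGeodesic w := by
  intro v hv
  have hrv : evalWord (revInv v) = evalWord (revInv w) := by
    rw [eval_revInv, eval_revInv, hv]
  have h3 := h (revInv v) hrv
  have h4 := negc_revInv v
  have h5 := negc_revInv w
  have hb : bz (evalWord v) = bz (evalWord w) := by rw [hv]
  have h1 := len_eq v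
  have h2 := len_eq w
  rw [hb] at h1
  have : (w.length : ℤ) ≤ (v.length : ℤ) := by omega
  exact_mod_cast this

lemma negc_zero_of_pos {w : List Letter} (h : ¬(lA ∈ w ∨ lB ∈ w)) : negc w = 0 := by
  push_neg at h
  simp only [negc, List.length_eq_zero_iff]
  rw [List.filter_eq_nil_iff]
  rintro ⟨g, (_|_)⟩ hm
  · rcases g with _|_
    · exact absurd hm (by simpa [lB] using h.2)
    · exact absurd hm (by simpa [lA] using h.1)
  · simp

lemma negc_revInv_zero_of_neg {w : List Letter} (h : ¬(la ∈ w ∨ lb ∈ w)) :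
    negc (revInv w) = 0 := by
  push_neg at h
  simp only [negc, List.length_eq_zero_iff]
  rw [List.filter_eq_nil_iff]
  intro l hm
  rw [revInv, List.mem_reverse, List.mem_map] at hm
  obtain ⟨⟨g, (_|_)⟩, hmem, rfl⟩ := hm
  · simp [linv]
  · rcases g with _|_
    · exact absurd hmem (by simpa [lb] using h.2)
    · exact absurd hmem (by simpa [la] using h.1)

theorem backward (w : List Letter) (hred : Reduced w)
    (c1 : ¬ (([la, lb] <:+: w ∨ [lb, la] <:+: w) ∧ ([lA, lB] <:+: w ∨ [lB, lA] <:+: w)))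
    (c2 : ¬ (([la, lb, la] <:+: w ∨ [lb, la, lb] <:+: w) ∧ (lA ∈ w ∨ lB ∈ w)))
    (c3 : ¬ (([lA, lB, lA] <:+: w ∨ [lB, lA, lB] <:+: w) ∧ (la ∈ w ∨ lb ∈ w))) :
    IsGeodesic w := by
  by_cases hpos : lA ∈ w ∨ lB ∈ w
  case neg =>
    -- no negative letters: automatically geodesic
    have h0 := negc_zero_of_pos hpos
    exact geodesic_of_negc (fun v _ => h0 ▸ Nat.zero_le _)
  by_cases hneg : la ∈ w ∨ lb ∈ w
  case neg =>
    -- no positive letters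
    have h0 := negc_revInv_zero_of_neg hneg
    exact geodesic_of_negc_rev (fun v _ => h0 ▸ Nat.zero_le _)
  -- mixed word
  have hnab : ¬([la, lb, la] <:+: w) ∧ ¬([lb, la, lb] <:+: w) := by
    constructor <;> intro h <;> exact c2 ⟨by tauto, hpos⟩
  have hnABA : ¬([lA, lB, lA] <:+: w) ∧ ¬([lB, lA, lB] <:+: w) := by
    constructor <;> intro h <;> exact c3 ⟨by tauto, hneg⟩
  by_cases hnp : [lA, lB] <:+: w ∨ [lB, lA] <:+: w
  · -- has a negative pair: then no positive pair; work with revInv w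
    have hpp : ¬([la, lb] <:+: w) ∧ ¬([lb, la] <:+: w) := by
      constructor <;> intro h <;> exact c1 ⟨by tauto, hnp⟩
    have hca : CondA (revInv w) := by
      refine condA_of _ (reduced_revInv hred) ?_ ?_ ?_ ?_ <;>
        rw [infix_revInv_iff]
      · exact (by simpa [revInv, lA, lB, lb, la, linv] using hpp.2 :
          ¬(revInv [lA, lB] <:+: w))
      · exact (by simpa [revInv, lA, lB, lb, la, linv] using hpp.1 :
          ¬(revInv [lB, lA] <:+: w))
      · exact (by simpa [revInv, lA, lB, lb, la, linv] using hnABA.1 :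
          ¬(revInv [la, lb, la] <:+: w))
      · exact (by simpa [revInv, lA, lB, lb, la, linv] using hnABA.2 :
          ¬(revInv [lb, la, lb] <:+: w))
    exact geodesic_of_negc_rev (key_negc hca)
  · -- no negative pair: direct
    push_neg at hnp
    have hca : CondA w := condA_of _ hred hnp.1 hnp.2 hnab.1 hnab.2
    exact geodesic_of_negc (key_negc hca)

/-! ### Forward direction: shortening rewrites -/

@[simp] lemma evalWord_nil : evalWord [] = 1 := rfl

def GD : B3 := ga * gb * ga

def flipL (l : Letter) : Letter := (!l.1, l.2)

lemma evalLetter_pos (g : Bool) : evalLetter (g, true) = gen g := rfl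
lemma evalLetter_neg (g : Bool) : evalLetter (g, false) = (gen g)⁻¹ := rfl

lemma GD_gen (c : Bool) : GD * gen c = gen (!c) * GD := by
  cases c
  · show (ga * gb * ga) * gb = ga * (ga * gb * ga)
    conv_rhs => rw [braid]
    group
  · show (ga * gb * ga) * ga = gb * (ga * gb * ga)
    conv_lhs => rw [braid]
    group

lemma conj_gen (c : Bool) : MulAut.conj GD (gen c) = gen (!c) := by
  simp only [MulAut.conj_apply]
  rw [GD_gen]
  group

lemma conj_letter (l : Letter) :
    MulAut.conj GD (evalLetter l) = evalLetter (flipL l) := by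
  rcases l with ⟨g, (_|_)⟩
  · rw [evalLetter_neg, map_inv, conj_gen]; rfl
  · rw [evalLetter_pos, conj_gen]; rfl

lemma conj_eval (v : List Letter) :
    MulAut.conj GD (evalWord v) = evalWord (v.map flipL) := by
  induction v with
  | nil => simp
  | cons l t ih =>
      rw [evalWord_cons, map_mul, conj_letter, ih]
      rfl

/-- flip is also conjugation by `GD⁻¹` -/
lemma conj_eval' (v : List Letter) :
    GD⁻¹ * evalWord v * GD = evalWord (v.map flipL) := by
  have h2 : (v.map flipL).map flipL = v := by
    rw [List.map_map]
    have : flipL ∘ flipL = id := by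
      funext l; rcases l with ⟨g, s⟩; simp [flipL]
    rw [this, List.map_id]
  have h := conj_eval (v.map flipL)
  rw [h2, MulAut.conj_apply] at h
  rw [← h]
  group

def ppw (c : Bool) : List Letter := [(c, true), (!c, true)]
def nnw (d : Bool) : List Letter := [(!d, false), (d, false)]
def qqw (e : Bool) : List Letter := [(!e, true), (e, true)]
def mmw (e : Bool) : List Letter := [(e, false), (!e, false)]
def triw (c : Bool) : List Letter := [(c, true), (!c, true), (c, true)]
def triw' (c : Bool) : List Letter := [(c, false), (!c, false), (c, false)]

lemma eval_ppw (c : Bool) : evalWord (ppw c) = GD * (gen c)⁻¹ := by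
  cases c
  · show evalLetter (false, true) * (evalLetter (true, true) * 1) = GD * (gen false)⁻¹
    rw [evalLetter_pos, evalLetter_pos]
    show gb * (ga * 1) = (ga * gb * ga) * gb⁻¹
    rw [braid]; group
  · show evalLetter (true, true) * (evalLetter (false, true) * 1) = GD * (gen true)⁻¹
    rw [evalLetter_pos, evalLetter_pos]
    show ga * (gb * 1) = (ga * gb * ga) * ga⁻¹
    group

lemma eval_nnw (d : Bool) : evalWord (nnw d) = gen d * GD⁻¹ := by
  cases d
  · show evalLetter (true, false) * (evalLetter (false, false) * 1) = gen false * GD⁻¹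
    rw [evalLetter_neg, evalLetter_neg]
    show (gen true)⁻¹ * ((gen false)⁻¹ * 1) = gen false * (ga * gb * ga)⁻¹
    show ga⁻¹ * (gb⁻¹ * 1) = gb * (ga * gb * ga)⁻¹
    rw [braid]; group
  · show evalLetter (false, false) * (evalLetter (true, false) * 1) = gen true * GD⁻¹
    show gb⁻¹ * (ga⁻¹ * 1) = ga * (ga * gb * ga)⁻¹
    group

lemma eval_qqw (e : Bool) : evalWord (qqw e) = (gen e)⁻¹ * GD := by
  cases e
  · show ga * (gb * 1) = gb⁻¹ * (ga * gb * ga)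
    rw [braid]; group
  · show gb * (ga * 1) = ga⁻¹ * (ga * gb * ga)
    group

lemma eval_mmw (e : Bool) : evalWord (mmw e) = GD⁻¹ * gen e := by
  cases e
  · show gb⁻¹ * (ga⁻¹ * 1) = (ga * gb * ga)⁻¹ * gb
    rw [braid]; group
  · show ga⁻¹ * (gb⁻¹ * 1) = (ga * gb * ga)⁻¹ * ga
    group

lemma eval_triw (c : Bool) : evalWord (triw c) = GD := by
  cases c
  · show gb * (ga * (gb * 1)) = ga * gb * ga
    rw [braid]; group
  · show ga * (gb * (ga * 1)) = ga * gb * ga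
    group

lemma eval_triw' (c : Bool) : evalWord (triw' c) = GD⁻¹ := by
  cases c
  · show gb⁻¹ * (ga⁻¹ * (gb⁻¹ * 1)) = (ga * gb * ga)⁻¹
    rw [braid]; group
  · show ga⁻¹ * (gb⁻¹ * (ga⁻¹ * 1)) = (ga * gb * ga)⁻¹
    group

lemma eval_single_neg (g : Bool) : evalWord [(g, false)] = (gen g)⁻¹ := by
  show evalLetter (g, false) * 1 = _
  rw [evalLetter_neg]; group

lemma eval_single_pos (g : Bool) : evalWord [(g, true)] = gen g := by
  show evalLetter (g, true) * 1 = _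
  rw [evalLetter_pos]; group

lemma short_PN (u v t : List Letter) (c d : Bool) :
    evalWord (u ++ ppw c ++ v ++ nnw d ++ t) =
      evalWord (u ++ [(!c, false)] ++ v.map flipL ++ [(!d, true)] ++ t) := by
  simp only [evalWord_append, eval_ppw, eval_nnw, eval_single_neg, eval_single_pos]
  rw [← conj_gen c, ← conj_gen d, ← conj_eval]
  simp only [MulAut.conj_apply]
  group

lemma short_NP (u v t : List Letter) (c d : Bool) :
    evalWord (u ++ nnw d ++ v ++ ppw c ++ t) =
      evalWord (u ++ [(d, true)] ++ v.map flipL ++ [(c, false)] ++ t) := by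
  simp only [evalWord_append, eval_ppw, eval_nnw, eval_single_neg, eval_single_pos]
  rw [← conj_eval']
  group

lemma short_TR (u r₁ r₂ : List Letter) (c e : Bool) :
    evalWord (u ++ triw c ++ r₁ ++ [(e, false)] ++ r₂) =
      evalWord (u ++ r₁.map flipL ++ ppw e ++ r₂) := by
  simp only [evalWord_append, eval_triw, eval_ppw, eval_single_neg]
  rw [← conj_eval]
  simp only [MulAut.conj_apply]
  group

lemma short_TL (u₁ u₂ r : List Letter) (c e : Bool) :
    evalWord (u₁ ++ [(e, false)] ++ u₂ ++ triw c ++ r) =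
      evalWord (u₁ ++ qqw e ++ u₂.map flipL ++ r) := by
  simp only [evalWord_append, eval_triw, eval_qqw, eval_single_neg]
  rw [← conj_eval']
  group

lemma short_TR' (u r₁ r₂ : List Letter) (c e : Bool) :
    evalWord (u ++ triw' c ++ r₁ ++ [(e, true)] ++ r₂) =
      evalWord (u ++ r₁.map flipL ++ mmw e ++ r₂) := by
  simp only [evalWord_append, eval_triw', eval_mmw, eval_single_pos]
  rw [← conj_eval']
  group

lemma short_TL' (u₁ u₂ r : List Letter) (c e : Bool) :
    evalWord (u₁ ++ [(e, true)] ++ u₂ ++ triw' c ++ r) =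
      evalWord (u₁ ++ nnw e ++ u₂.map flipL ++ r) := by
  simp only [evalWord_append, eval_triw', eval_nnw, eval_single_pos]
  rw [← conj_eval]
  simp only [MulAut.conj_apply]
  group

lemma two_infix {x₁ x₂ y₁ y₂ : Letter}
    (h1 : x₁ ≠ y₁) (h2 : x₁ ≠ y₂) (h3 : x₂ ≠ y₁) (h4 : x₂ ≠ y₂) :
    ∀ w : List Letter, [x₁, x₂] <:+: w → [y₁, y₂] <:+: w →
      ∃ u v t, w = u ++ [x₁, x₂] ++ v ++ [y₁, y₂] ++ t ∨
               w = u ++ [y₁, y₂] ++ v ++ [x₁, x₂] ++ t := by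
  intro w
  induction w with
  | nil => intro hx _; exact absurd (List.eq_nil_of_infix_nil hx) (by simp)
  | cons a t ih =>
      intro hx hy
      rcases List.infix_cons_iff.1 hx with hxp | hxt
      · -- [x₁,x₂] is a prefix: a = x₁, t = x₂ :: t₂
        rw [List.cons_prefix_cons] at hxp
        obtain ⟨rfl, hxp2⟩ := hxp
        obtain ⟨t₂, rfl⟩ : ∃ t₂, t = x₂ :: t₂ := by
          rcases t with _ | ⟨b, t₂⟩
          · exact absurd hxp2 (by simp)
          · rw [List.cons_prefix_cons] at hxp2
            exact ⟨t₂, by rw [hxp2.1]⟩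
        -- now find [y₁,y₂] inside x₁ :: x₂ :: t₂
        rcases List.infix_cons_iff.1 hy with hyp | hyt
        · rw [List.cons_prefix_cons] at hyp; exact absurd hyp.1.symm h1
        rcases List.infix_cons_iff.1 hyt with hyp | hyt2
        · rw [List.cons_prefix_cons] at hyp; exact absurd hyp.1.symm h3
        obtain ⟨s, t', hst⟩ := hyt2
        exact ⟨[], s, t', Or.inl (by rw [← hst]; simp)⟩
      · rcases List.infix_cons_iff.1 hy with hyp | hyt
        · -- [y₁,y₂] is a prefix: a = y₁, t = y₂ :: t₂
          rw [List.cons_prefix_cons] at hyp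
          obtain ⟨rfl, hyp2⟩ := hyp
          obtain ⟨t₂, rfl⟩ : ∃ t₂, t = y₂ :: t₂ := by
            rcases t with _ | ⟨b, t₂⟩
            · exact absurd hyp2 (by simp)
            · rw [List.cons_prefix_cons] at hyp2
              exact ⟨t₂, by rw [hyp2.1]⟩
          rcases List.infix_cons_iff.1 hxt with hxp | hxt2
          · rw [List.cons_prefix_cons] at hxp; exact absurd hxp.1 h2
          obtain ⟨s, t', hst⟩ := hxt2
          exact ⟨[], s, t', Or.inr (by rw [← hst]; simp)⟩
        · obtain ⟨u, v, t', hc⟩ := ih hxt hyt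
          refine ⟨a :: u, v, t', ?_⟩
          rcases hc with hc | hc
          · exact Or.inl (by rw [hc]; simp)
          · exact Or.inr (by rw [hc]; simp)

lemma forward1 (w : List Letter) (hg : IsGeodesic w) :
    ¬ (([la, lb] <:+: w ∨ [lb, la] <:+: w) ∧ ([lA, lB] <:+: w ∨ [lB, lA] <:+: w)) := by
  rintro ⟨hP, hN⟩
  obtain ⟨c, hc⟩ : ∃ c, [(c, true), (!c, true)] <:+: w := by
    rcases hP with h | h
    · exact ⟨true, h⟩
    · exact ⟨false, h⟩
  obtain ⟨d, hd⟩ : ∃ d, [(!d, false), (d, false)] <:+: w := by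
    rcases hN with h | h
    · exact ⟨false, h⟩
    · exact ⟨true, h⟩
  obtain ⟨u, v, t, hcase⟩ :=
    two_infix (by simp) (by simp) (by simp) (by simp) w hc hd
  rcases hcase with hw | hw
  · have hw' : w = u ++ ppw c ++ v ++ nnw d ++ t := by simpa [ppw, nnw] using hw
    have heq : evalWord (u ++ [(!c, false)] ++ v.map flipL ++ [(!d, true)] ++ t) = evalWord w := by
      rw [hw']; exact (short_PN u v t c d).symm
    have hlen := hg _ heq
    rw [hw'] at hlen
    simp [ppw, nnw, List.length_append] at hlen
  · have hw' : w = u ++ nnw d ++ v ++ ppw c ++ t := by simpa [ppw, nnw] using hw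
    have heq : evalWord (u ++ [(d, true)] ++ v.map flipL ++ [(c, false)] ++ t) = evalWord w := by
      rw [hw']; exact (short_NP u v t c d).symm
    have hlen := hg _ heq
    rw [hw'] at hlen
    simp [ppw, nnw, List.length_append] at hlen

lemma forward2 (w : List Letter) (hg : IsGeodesic w) :
    ¬ (([la, lb, la] <:+: w ∨ [lb, la, lb] <:+: w) ∧ (lA ∈ w ∨ lB ∈ w)) := by
  rintro ⟨hT, hL⟩
  obtain ⟨c, u, r, hw⟩ : ∃ c u r, w = u ++ triw c ++ r := by
    rcases hT with ⟨u, r, h⟩ | ⟨u, r, h⟩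
    · exact ⟨true, u, r, h.symm⟩
    · exact ⟨false, u, r, h.symm⟩
  obtain ⟨e, he⟩ : ∃ e, (e, false) ∈ w := by
    rcases hL with h | h
    · exact ⟨true, h⟩
    · exact ⟨false, h⟩
  rw [hw] at he
  rcases List.mem_append.1 he with he' | hr
  · rcases List.mem_append.1 he' with hu | htri
    · -- negative letter inside u
      obtain ⟨u₁, u₂, rfl⟩ := List.append_of_mem hu
      have heq : evalWord (u₁ ++ qqw e ++ u₂.map flipL ++ r) = evalWord w := by
        rw [hw]
        rw [show (u₁ ++ (e, false) :: u₂) ++ triw c ++ r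
            = u₁ ++ [(e, false)] ++ u₂ ++ triw c ++ r from by simp]
        exact (short_TL u₁ u₂ r c e).symm
      have hlen := hg _ heq
      rw [hw] at hlen
      simp [qqw, triw, List.length_append] at hlen
      omega
    · exact absurd htri (by simp [triw])
  · -- negative letter inside r
    obtain ⟨r₁, r₂, rfl⟩ := List.append_of_mem hr
    have heq : evalWord (u ++ r₁.map flipL ++ ppw e ++ r₂) = evalWord w := by
      rw [hw]
      rw [show u ++ triw c ++ (r₁ ++ (e, false) :: r₂)
          = u ++ triw c ++ r₁ ++ [(e, false)] ++ r₂ from by simp]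
      exact (short_TR u r₁ r₂ c e).symm
    have hlen := hg _ heq
    rw [hw] at hlen
    simp [ppw, triw, List.length_append] at hlen
    omega

lemma forward3 (w : List Letter) (hg : IsGeodesic w) :
    ¬ (([lA, lB, lA] <:+: w ∨ [lB, lA, lB] <:+: w) ∧ (la ∈ w ∨ lb ∈ w)) := by
  rintro ⟨hT, hL⟩
  obtain ⟨c, u, r, hw⟩ : ∃ c u r, w = u ++ triw' c ++ r := by
    rcases hT with ⟨u, r, h⟩ | ⟨u, r, h⟩
    · exact ⟨true, u, r, h.symm⟩
    · exact ⟨false, u, r, h.symm⟩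
  obtain ⟨e, he⟩ : ∃ e, (e, true) ∈ w := by
    rcases hL with h | h
    · exact ⟨true, h⟩
    · exact ⟨false, h⟩
  rw [hw] at he
  rcases List.mem_append.1 he with he' | hr
  · rcases List.mem_append.1 he' with hu | htri
    · obtain ⟨u₁, u₂, rfl⟩ := List.append_of_mem hu
      have heq : evalWord (u₁ ++ nnw e ++ u₂.map flipL ++ r) = evalWord w := by
        rw [hw]
        rw [show (u₁ ++ (e, true) :: u₂) ++ triw' c ++ r
            = u₁ ++ [(e, true)] ++ u₂ ++ triw' c ++ r from by simp]
        exact (short_TL' u₁ u₂ r c e).symm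
      have hlen := hg _ heq
      rw [hw] at hlen
      simp [nnw, triw', List.length_append] at hlen
      omega
    · exact absurd htri (by simp [triw'])
  · obtain ⟨r₁, r₂, rfl⟩ := List.append_of_mem hr
    have heq : evalWord (u ++ r₁.map flipL ++ mmw e ++ r₂) = evalWord w := by
      rw [hw]
      rw [show u ++ triw' c ++ (r₁ ++ (e, true) :: r₂)
          = u ++ triw' c ++ r₁ ++ [(e, true)] ++ r₂ from by simp]
      exact (short_TR' u r₁ r₂ c e).symm
    have hlen := hg _ heq
    rw [hw] at hlen
    simp [mmw, triw', List.length_append] at hlen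
    omega


/-- Characterization of geodesics in `B₃`: a freely reduced word is geodesic
iff it satisfies the `*` and `**` conditions. -/
theorem stmt7 (w : List Letter) (hred : Reduced w) :
    IsGeodesic w ↔
      (¬ (([la, lb] <:+: w ∨ [lb, la] <:+: w) ∧ ([lA, lB] <:+: w ∨ [lB, lA] <:+: w))) ∧
      (¬ (([la, lb, la] <:+: w ∨ [lb, la, lb] <:+: w) ∧ (lA ∈ w ∨ lB ∈ w))) ∧
      (¬ (([lA, lB, lA] <:+: w ∨ [lB, lA, lB] <:+: w) ∧ (la ∈ w ∨ lb ∈ w))) := by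
  constructor
  · intro hg
    exact ⟨forward1 w hg, forward2 w hg, forward3 w hg⟩
  · rintro ⟨c1, c2, c3⟩
    exact backward w hred c1 c2 c3
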